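/- arXiv:1104.5543 — 2 statements merged into one kernel-verified Lean document; each statement's English description precedes it below -/
import Mathlib

section
/- Let ν be a non-atomic probability measure on the boundary of a δ-hyperbolic space (G, d) with basepoint 1, such that ν is the hitting measure of a random walk converging to the boundary almost surely. Suppose for contradiction that the shadows do not decay uniformly: then there exist ε > 0 and a sequence of shadows S_1(x_i, r_i) with r_i → ∞ and ν(S_1(x_i, r_i)) ≥ ε. Show that the set U of boundary points lying in infinitely many of these shadows is a single point, contradicting non-atomicity. Conclude: for any ε > 0 there is a constant K(ε) such that ν(S_1(x, r)) ≤ ε whenever r ≥ K(ε), uniformly in x. -/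
/-!
A finite measure without atoms gives uniformly small mass to all small closed balls. Otherwise
there are balls `B(yₙ, 1/(n+1))` of measure at least `ε`; their limsup has measure at least `ε`,
so it contains a point `x` lying in infinitely many of these shrinking balls. Then every closed
ball around `x` contains one of them, so the atom `{x}` has measure at least `ε`. A shadow
`S x r` lies in the ball of radius `f r` around any of its points, and `f r → 0`.
-/

open MeasureTheory Filter Topology Metric

theorem le_measure_limsup_atTop {α : Type*} [MeasurableSpace α] {μ : Measure α} [IsFiniteMeasure μ]
    {s : ℕ → Set α} (hs : ∀ n, MeasurableSet (s n)) {c : ENNReal} (hc : ∀ n, c ≤ μ (s n)) :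
    c ≤ μ (limsup s atTop) := by
  have htail : Antitone fun n => ⋃ i ≥ n, s i := fun m n hmn =>
    Set.biUnion_subset_biUnion_left fun i hi => hmn.trans hi
  rw [limsup_eq_iInf_iSup_of_nat]
  change c ≤ μ (⋂ n, ⋃ i ≥ n, s i)
  rw [htail.measure_iInter
    (fun n => (MeasurableSet.biUnion (Set.to_countable _) fun i _ => hs i).nullMeasurableSet)
    ⟨0, measure_ne_top μ _⟩]
  exact le_iInf fun n =>
    (hc n).trans (measure_mono (Set.subset_biUnion_of_mem (u := s) (le_refl n)))

theorem tendsto_measure_closedBall_nhdsGT_zero {α : Type*} [PseudoMetricSpace α] [MeasurableSpace α]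
    [OpensMeasurableSpace α] (μ : Measure α) [IsFiniteMeasure μ] (x : α) :
    Tendsto (fun r => μ (closedBall x r)) (𝓝[>] 0) (𝓝 (μ (closure {x}))) := by
  refine ((tendsto_measure_cthickening ⟨1, one_pos, measure_ne_top μ _⟩).mono_left
    nhdsWithin_le_nhds).congr' ?_
  filter_upwards [self_mem_nhdsWithin] with r hr
  rw [cthickening_singleton x hr.le]

theorem exists_pos_forall_measure_closedBall_le {α : Type*} [MetricSpace α] [MeasurableSpace α]
    [OpensMeasurableSpace α] (μ : Measure α) [IsFiniteMeasure μ] [NullSingletonClass μ]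
    {ε : ENNReal} (hε : 0 < ε) : ∃ δ > 0, ∀ x, μ (closedBall x δ) ≤ ε := by
  by_contra! h
  choose y hy using fun n : ℕ => h (1 / (n + 1)) (Nat.one_div_pos_of_nat : (0 : ℝ) < 1 / (n + 1))
  have hlimsup : ε ≤ μ (limsup (fun n => closedBall (y n) (1 / (n + 1))) atTop) :=
    le_measure_limsup_atTop (fun n => isClosed_closedBall.measurableSet) fun n => (hy n).le
  obtain ⟨x, hx⟩ := nonempty_of_measure_ne_zero (hε.trans_le hlimsup).ne'
  rw [mem_limsup_iff_frequently_mem] at hx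
  have hball : ∀ t > 0, ε ≤ μ (closedBall x t) := by
    intro t ht
    have hsmall : ∀ᶠ n : ℕ in atTop, 2 * (1 / ((n : ℝ) + 1)) ≤ t :=
      (tendsto_one_div_add_atTop_nhds_zero_nat.const_mul 2).eventually
        (eventually_le_nhds (by linarith))
    obtain ⟨n, hxn, hn⟩ := (hx.and_eventually hsmall).exists
    refine (hy n).le.trans (measure_mono (closedBall_subset_closedBall' ?_))
    rw [mem_closedBall, dist_comm] at hxn
    linarith
  have hlim := tendsto_measure_closedBall_nhdsGT_zero μ x
  rw [closure_singleton, measure_singleton] at hlim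
  exact hε.not_ge (ge_of_tendsto hlim (eventually_nhdsWithin_of_forall hball))

theorem shadow_measure_uniformly_small_general
    {B : Type*} [MetricSpace B] [MeasurableSpace B] [BorelSpace B]
    (ν : Measure B) [IsProbabilityMeasure ν] [NullSingletonClass ν]
    {X : Type*} (S : X → ℝ → Set B)
    (f : ℝ → ℝ) (hf : Tendsto f atTop (nhds 0))
    (hdiam : ∀ x r, ∀ y ∈ S x r, ∀ z ∈ S x r, dist y z ≤ f r) :
    ∀ ε : ℝ, 0 < ε → ∃ K : ℝ, ∀ (x : X) (r : ℝ), K ≤ r →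
      ν (S x r) ≤ ENNReal.ofReal ε := by
  intro ε hε
  obtain ⟨δ, hδ, hball⟩ := exists_pos_forall_measure_closedBall_le ν (ENNReal.ofReal_pos.2 hε)
  obtain ⟨K, hK⟩ := eventually_atTop.1 (hf.eventually (eventually_le_nhds hδ))
  refine ⟨K, fun x r hr => ?_⟩
  rcases (S x r).eq_empty_or_nonempty with hempty | ⟨y, hy⟩
  · simp [hempty]
  · exact (measure_mono fun z hz => mem_closedBall.2 ((hdiam x r z hz y hy).trans (hK r hr))).trans
      (hball y)

/-- Let `ν` be a non-atomic Borel probability measure on the boundary, and suppose the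
shadows `S x r` have diameter at most `f r` with `f r → 0` as `r → ∞` (as holds for shadows
in a δ-hyperbolic space, measured in a visual metric on the boundary: any two points of
`S_1(x,r)` have Gromov product at least `r - 2δ`). Then for every `ε > 0` there is a
constant `K(ε)` such that `ν(S x r) ≤ ε` whenever `r ≥ K(ε)`, uniformly in `x`. -/
theorem shadow_measure_uniformly_small
    {B : Type*} [MetricSpace B] [MeasurableSpace B] [BorelSpace B]
    (ν : Measure B) [IsProbabilityMeasure ν] [NullSingletonClass ν]
    {X : Type*} (S : X → ℝ → Set B)
    (hmeas : ∀ x r, MeasurableSet (S x r))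
    (f : ℝ → ℝ) (hf : Tendsto f atTop (nhds 0))
    (hdiam : ∀ x r, ∀ y ∈ S x r, ∀ z ∈ S x r, dist y z ≤ f r) :
    ∀ ε : ℝ, 0 < ε → ∃ K : ℝ, ∀ (x : X) (r : ℝ), K ≤ r →
      ν (S x r) ≤ ENNReal.ofReal ε :=
  shadow_measure_uniformly_small_general ν S f hf hdiam
end

section
/- Let μ and μ̃ (the reflected measure μ̃(g) = μ(g^{-1})) generate random walks v_n, w_n on a group G acting on a δ-hyperbolic space, and suppose: (a) there are constants K₆, K₇ and c₁ < 1 such that μ^{*n}(S_1(x, r)) ≤ K₇ c₁^r and μ̃^{*n}(S_1(x,r)) ≤ K₇ c₁^r for all n, r, and all x with d(1,x) ≥ K₆; (b) there are L > 0 and c₂ < 1 with P(d(1, w_n) ≤ Ln) ≤ O(c₂^n). Then there exist constants such that (μ^{*n} × μ̃^{*n})(S_1(Δ, r)) ≤ O(c₁^r) + O(c₂^n) for all n and r, where Δ is the diagonal in Ḡ × Ḡ. -/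
/-!
If `(v, w)` lies in a shadow of the diagonal, hyperbolicity puts `v` in the shadow of `w` with
parameter `r - 2δ`. Integrating over `w` first: when `d(1, w) > L n ≥ K₆` the decay bound for
`P n` applies to that shadow, and the event `d(1, w) ≤ L n` has `Q n`-measure `O(c₂ ^ n)`.
The finitely many `n` with `L n < K₆` only enlarge the constant, since all measures are at
most `1`.
-/

open MeasureTheory

theorem le_gromovProduct_of_mem_shadow {G : Type*} (gp : G → G → ℝ) (δ r : ℝ)
    (hgp_symm : ∀ x y : G, gp x y = gp y x)
    (hhyp : ∀ x y z : G, min (gp x z) (gp y z) - 2 * δ ≤ gp x y)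
    {x v w : G} (hv : r ≤ gp x v) (hw : r ≤ gp x w) : r - 2 * δ ≤ gp w v := by
  have hmin : r ≤ min (gp w x) (gp v x) := by
    rw [le_min_iff, hgp_symm w x, hgp_symm v x]
    exact ⟨hw, hv⟩
  linarith [hhyp w v x]

theorem MeasureTheory.Measure.prod_apply_le_add_of_slice_le {α β : Type*} [MeasurableSpace α]
    [MeasurableSpace β] (μ : Measure α) (ν : Measure β) [IsProbabilityMeasure μ]
    [IsProbabilityMeasure ν] {s : Set (α × β)} (hs : MeasurableSet s) {B : Set β}
    (hB : MeasurableSet B) {ε : ENNReal} (hslice : ∀ w ∉ B, μ ((fun v => (v, w)) ⁻¹' s) ≤ ε) :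
    μ.prod ν s ≤ ε + ν B := by
  have hpointwise : ∀ w, μ ((fun v => (v, w)) ⁻¹' s) ≤ ε + B.indicator 1 w := by
    intro w
    by_cases hw : w ∈ B
    · simpa [hw] using le_add_left prob_le_one
    · simpa [hw] using hslice w hw
  calc μ.prod ν s = ∫⁻ w, μ ((fun v => (v, w)) ⁻¹' s) ∂ν := Measure.prod_apply_symm hs
    _ ≤ ∫⁻ w, (ε + B.indicator 1 w) ∂ν := lintegral_mono hpointwise
    _ = ε + ν B := by
      rw [lintegral_add_left measurable_const, lintegral_const, measure_univ, mul_one,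
        lintegral_indicator_one hB]

-- For the finitely many `n < N`, a quantity at most `1` is absorbed by `C * c ^ n`.
theorem exists_bound_of_le_one_of_forall_ge {ι : Type*} (f : ℕ → ι → ENNReal) (a : ι → ℝ)
    {c : ℝ} (hc0 : 0 < c) (hc1 : c ≤ 1) (N : ℕ) (A B : ℝ) (hf1 : ∀ n i, f n i ≤ 1)
    (ha : ∀ i, 0 ≤ a i)
    (hf : ∀ n ≥ N, ∀ i, f n i ≤ ENNReal.ofReal (A * a i) + ENNReal.ofReal (B * c ^ n)) :
    ∃ C : ℝ, ∀ n i, f n i ≤ ENNReal.ofReal (C * a i) + ENNReal.ofReal (C * c ^ n) := by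
  refine ⟨max (max A B) (c ^ N)⁻¹, fun n i => ?_⟩
  set C := max (max A B) (c ^ N)⁻¹
  rcases lt_or_ge n N with hn | hn
  · have hone : 1 ≤ C * c ^ n :=
      calc (1 : ℝ) = (c ^ N)⁻¹ * c ^ N := (inv_mul_cancel₀ (pow_pos hc0 N).ne').symm
        _ ≤ C * c ^ n := mul_le_mul (le_max_right _ _)
          (pow_le_pow_of_le_one hc0.le hc1 hn.le) (pow_pos hc0 N).le
          ((inv_pos.mpr (pow_pos hc0 N)).le.trans (le_max_right _ _))
    calc f n i ≤ 1 := hf1 n i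
      _ ≤ ENNReal.ofReal (C * c ^ n) := ENNReal.one_le_ofReal.mpr hone
      _ ≤ _ := le_add_self
  · refine (hf n hn i).trans (add_le_add ?_ ?_) <;> apply ENNReal.ofReal_le_ofReal
    · exact mul_le_mul_of_nonneg_right ((le_max_left _ _).trans (le_max_left _ _)) (ha i)
    · exact mul_le_mul_of_nonneg_right ((le_max_right _ _).trans (le_max_left _ _))
        (pow_nonneg hc0.le n)

theorem product_measure_diagonal_shadow_bound_general
    {G : Type*} [Group G] [Countable G] [MeasurableSpace G] [MeasurableSingletonClass G]
    (d : G → G → ℝ) (gp : G → G → ℝ) (δ : ℝ)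
    (hgp_symm : ∀ x y : G, gp x y = gp y x)
    (hhyp : ∀ x y z : G, min (gp x z) (gp y z) - 2 * δ ≤ gp x y)
    (P Q : ℕ → Measure G)
    [∀ n, IsProbabilityMeasure (P n)] [∀ n, IsProbabilityMeasure (Q n)]
    (K₆ K₇ c₁ c₂ L : ℝ) (hc₁0 : 0 < c₁) (hc₂0 : 0 < c₂) (hc₂ : c₂ < 1)
    (hL : 0 < L)
    (haP : ∀ (n : ℕ) (x : G) (r : ℝ), K₆ ≤ d 1 x →
      P n {y | r ≤ gp x y} ≤ ENNReal.ofReal (K₇ * c₁ ^ r))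
    (hb : ∃ C₂ : ℝ, ∀ n : ℕ, Q n {x | d 1 x ≤ L * n} ≤ ENNReal.ofReal (C₂ * c₂ ^ n)) :
    ∃ C : ℝ, ∀ (n : ℕ) (r : ℝ),
      ((P n).prod (Q n)) {p : G × G | ∃ x : G, r ≤ gp x p.1 ∧ r ≤ gp x p.2}
        ≤ ENNReal.ofReal (C * c₁ ^ r) + ENNReal.ofReal (C * c₂ ^ n) := by
  obtain ⟨C₂, hC₂⟩ := hb
  obtain ⟨N, hN⟩ := exists_nat_ge (K₆ / L)
  refine exists_bound_of_le_one_of_forall_ge _ _ hc₂0 hc₂.le N (K₇ * c₁ ^ (-(2 * δ))) C₂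
    (fun _ _ => prob_le_one) (fun r => (Real.rpow_pos_of_pos hc₁0 r).le) fun n hn r => ?_
  have hK₆ : K₆ ≤ L * n := by
    rw [mul_comm, ← div_le_iff₀ hL]
    exact hN.trans (Nat.cast_le.mpr hn)
  have hslice : ∀ w ∉ {w | d 1 w ≤ L * n},
      P n ((fun v => (v, w)) ⁻¹' {p : G × G | ∃ x : G, r ≤ gp x p.1 ∧ r ≤ gp x p.2})
        ≤ ENNReal.ofReal (K₇ * c₁ ^ (r - 2 * δ)) := by
    intro w hw
    have hshadow : (fun v => (v, w)) ⁻¹' {p : G × G | ∃ x : G, r ≤ gp x p.1 ∧ r ≤ gp x p.2}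
        ⊆ {v | r - 2 * δ ≤ gp w v} := fun _ ⟨_, hv, hw'⟩ =>
      le_gromovProduct_of_mem_shadow gp δ r hgp_symm hhyp hv hw'
    exact (measure_mono hshadow).trans (haP n w _ (hK₆.trans (not_le.mp hw).le))
  calc _ ≤ ENNReal.ofReal (K₇ * c₁ ^ (r - 2 * δ)) + Q n {w | d 1 w ≤ L * n} :=
        Measure.prod_apply_le_add_of_slice_le _ _ (Set.to_countable _).measurableSet
          (Set.to_countable _).measurableSet hslice
    _ = ENNReal.ofReal (K₇ * c₁ ^ (-(2 * δ)) * c₁ ^ r) + Q n {w | d 1 w ≤ L * n} := by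
      rw [sub_eq_neg_add, Real.rpow_add hc₁0, mul_assoc]
    _ ≤ _ := add_le_add_right (hC₂ n) _

/-- If the measures `P n = μ^{*n}` and `Q n = μ̃^{*n}` of shadows decay exponentially in the
shadow parameter (uniformly over shadows with center at distance at least `K₆` from the
basepoint), and the `Q`-walk makes linear progress, then the product measures of shadows of
the diagonal satisfy `(μ^{*n} × μ̃^{*n})(S_1(Δ, r)) ≤ O(c₁^r) + O(c₂^n)`. -/
theorem product_measure_diagonal_shadow_bound
    {G : Type*} [Group G] [Countable G] [MeasurableSpace G] [MeasurableSingletonClass G]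
    (d : G → G → ℝ) (gp : G → G → ℝ) (δ : ℝ)
    (hgp_symm : ∀ x y : G, gp x y = gp y x)
    (hhyp : ∀ x y z : G, min (gp x z) (gp y z) - 2 * δ ≤ gp x y)
    (P Q : ℕ → Measure G)
    [∀ n, IsProbabilityMeasure (P n)] [∀ n, IsProbabilityMeasure (Q n)]
    (K₆ K₇ c₁ c₂ L : ℝ) (hc₁0 : 0 < c₁) (hc₁ : c₁ < 1) (hc₂0 : 0 < c₂) (hc₂ : c₂ < 1)
    (hL : 0 < L)
    (haP : ∀ (n : ℕ) (x : G) (r : ℝ), K₆ ≤ d 1 x →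
      P n {y | r ≤ gp x y} ≤ ENNReal.ofReal (K₇ * c₁ ^ r))
    (haQ : ∀ (n : ℕ) (x : G) (r : ℝ), K₆ ≤ d 1 x →
      Q n {y | r ≤ gp x y} ≤ ENNReal.ofReal (K₇ * c₁ ^ r))
    (hb : ∃ C₂ : ℝ, ∀ n : ℕ, Q n {x | d 1 x ≤ L * n} ≤ ENNReal.ofReal (C₂ * c₂ ^ n)) :
    ∃ C : ℝ, ∀ (n : ℕ) (r : ℝ),
      ((P n).prod (Q n)) {p : G × G | ∃ x : G, r ≤ gp x p.1 ∧ r ≤ gp x p.2}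
        ≤ ENNReal.ofReal (C * c₁ ^ r) + ENNReal.ofReal (C * c₂ ^ n) :=
  product_measure_diagonal_shadow_bound_general d gp δ hgp_symm hhyp P Q K₆ K₇ c₁ c₂ L hc₁0 hc₂0 hc₂
    hL haP hb
end
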